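/- For Q = (a† + a)/√2 and P = i(a† − a)/√2 in the (q;l,λ)-coherent state |z⟩, the variances satisfy (ΔQ)² = (ΔP)² = l²q^{λ−1}/2 + (q^{−1}−1)|z|²/2, so the states saturate equality (ΔQ)² = (ΔP)² = ΔQ·ΔP. -/

import Mathlib

/-!
The structure function satisfies `φ (n + 1) = q⁻¹ φ n + l² q^(λ-1)`, i.e.
`a a† = q⁻¹ a† a + l² q^(λ-1)`, and `ψ z` is `Σ √(w n) zⁿ |n⟩` normalized, with weights
`w n = q^(n(n-1)/2) / (γⁿ (q; q)ₙ)` obeying `φ (n + 1) w (n + 1) = w n`; this makes `ψ z` an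
eigenvector of `a` with eigenvalue `z`. Moving `a†` across the pairing then gives
`⟨a⟩ = z`, `⟨a†⟩ = z̄`, `⟨a²⟩ = z²`, `⟨a†²⟩ = z̄²`, `⟨a† a⟩ = |z|²` and
`⟨a a†⟩ = q⁻¹ |z|² + l² q^(λ-1)`, so every quadrature `α a† + β a` has variance
`α β ((q⁻¹ - 1) |z|² + l² q^(λ-1))`. Both `Q` and `P` have `α β = 1/2`.
-/

/-- Annihilation operator: `(a f) n = √φ(n+1) f (n+1)`, i.e. `a|n⟩ = √φ(n)|n-1⟩`. -/
noncomputable def aOp (φ : ℕ → ℝ) : Module.End ℂ (ℕ → ℂ) where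
  toFun f := fun n => (Real.sqrt (φ (n + 1)) : ℂ) * f (n + 1)
  map_add' f g := by funext n; simp [mul_add]
  map_smul' c f := by funext n; simp [smul_eq_mul]; ring

/-- Creation operator: `a†|n⟩ = √φ(n+1)|n+1⟩`. -/
noncomputable def adOp (φ : ℕ → ℝ) : Module.End ℂ (ℕ → ℂ) where
  toFun f := fun n => if n = 0 then 0 else (Real.sqrt (φ n) : ℂ) * f (n - 1)
  map_add' f g := by
    funext n; by_cases h : n = 0 <;> simp [h, mul_add]
  map_smul' c f := by
    funext n; by_cases h : n = 0 <;> simp [h, smul_eq_mul] <;> ring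

/-- Sesquilinear pairing on sequences. -/
noncomputable def ip (f g : ℕ → ℂ) : ℂ := ∑' n : ℕ, (starRingEnd ℂ) (f n) * g n

/-- Expectation value of an operator `T` in the state `f`. -/
noncomputable def expval (T : Module.End ℂ (ℕ → ℂ)) (f : ℕ → ℂ) : ℂ :=
  ip f (T f) / ip f f

open ComplexConjugate

section Ladder

variable {φ : ℕ → ℝ}

@[simp]
lemma aOp_apply (f : ℕ → ℂ) (n : ℕ) : aOp φ f n = √(φ (n + 1)) * f (n + 1) := rfl

@[simp]
lemma adOp_apply_zero (f : ℕ → ℂ) : adOp φ f 0 = 0 := rfl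

@[simp]
lemma adOp_apply_succ (f : ℕ → ℂ) (n : ℕ) : adOp φ f (n + 1) = √(φ (n + 1)) * f n := rfl

lemma nonneg_of_eq_mul_add {κ c : ℝ} (hκ : 0 ≤ κ) (hc : 0 ≤ c) (h0 : φ 0 = 0)
    (hrec : ∀ n, φ (n + 1) = κ * φ n + c) (n : ℕ) : 0 ≤ φ n := by
  induction n with
  | zero => exact h0.ge
  | succ n ih => rw [hrec]; positivity

lemma aOp_mul_adOp_apply (hφ : ∀ n, 0 ≤ φ n) (f : ℕ → ℂ) (n : ℕ) :
    (aOp φ * adOp φ) f n = φ (n + 1) * f n := by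
  rw [Module.End.mul_apply, aOp_apply, adOp_apply_succ, ← mul_assoc, ← Complex.ofReal_mul,
    Real.mul_self_sqrt (hφ _)]

lemma adOp_mul_aOp_apply (hφ : ∀ n, 0 ≤ φ n) (h0 : φ 0 = 0) (f : ℕ → ℂ) (n : ℕ) :
    (adOp φ * aOp φ) f n = φ n * f n := by
  rw [Module.End.mul_apply]
  cases n with
  | zero => simp [h0]
  | succ n =>
    rw [adOp_apply_succ, aOp_apply, ← mul_assoc, ← Complex.ofReal_mul,
      Real.mul_self_sqrt (hφ _)]

theorem aOp_mul_adOp {κ c : ℝ} (hκ : 0 ≤ κ) (hc : 0 ≤ c) (h0 : φ 0 = 0)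
    (hrec : ∀ n, φ (n + 1) = κ * φ n + c) :
    aOp φ * adOp φ = (κ : ℂ) • (adOp φ * aOp φ) + (c : ℂ) • 1 := by
  have hφ := nonneg_of_eq_mul_add hκ hc h0 hrec
  ext f n
  simp only [LinearMap.add_apply, LinearMap.smul_apply, Pi.add_apply, Pi.smul_apply,
    Module.End.one_apply, smul_eq_mul, aOp_mul_adOp_apply hφ, adOp_mul_aOp_apply hφ h0, hrec]
  push_cast
  ring

lemma hasSum_conj_mul_adOp {f g : ℕ → ℂ} {s : ℂ}
    (h : HasSum (fun n => conj (aOp φ f n) * g n) s) :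
    HasSum (fun n => conj (f n) * adOp φ g n) s := by
  rw [← hasSum_nat_add_iff' 1, Finset.sum_range_one, adOp_apply_zero, mul_zero, sub_zero]
  simpa [mul_assoc, mul_left_comm] using h

end Ladder

/-- Unlike `expval`, which is built from `tsum`, this records convergence of `⟨f, T f⟩`, so it is
stable under sums and scalar multiples of operators. -/
def HasExpval (T : Module.End ℂ (ℕ → ℂ)) (f : ℕ → ℂ) (x : ℂ) : Prop :=
  HasSum (fun n => conj (f n) * T f n) x

namespace HasExpval

variable {T S : Module.End ℂ (ℕ → ℂ)} {f : ℕ → ℂ} {x y : ℂ}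

lemma add (hT : HasExpval T f x) (hS : HasExpval S f y) : HasExpval (T + S) f (x + y) := by
  simpa [HasExpval, mul_add] using HasSum.add hT hS

lemma smul (hT : HasExpval T f x) (c : ℂ) : HasExpval (c • T) f (c * x) := by
  simpa [HasExpval, mul_left_comm] using HasSum.mul_left c hT

lemma expval_eq (hT : HasExpval T f x) (hf : HasExpval 1 f 1) : expval T f = x := by
  have h1 : ip f f = 1 := by simpa [ip, HasExpval] using HasSum.tsum_eq hf
  rw [expval, h1, div_one, ip, hT.tsum_eq]

variable {φ : ℕ → ℝ} {z : ℂ}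

lemma mul_aOp (hf : aOp φ f = z • f) (hT : HasExpval T f x) :
    HasExpval (T * aOp φ) f (z * x) := by
  simpa [HasExpval, hf, mul_left_comm] using HasSum.mul_left z hT

lemma adOp_mul (hf : aOp φ f = z • f) (hT : HasExpval T f x) :
    HasExpval (adOp φ * T) f (conj z * x) := by
  refine hasSum_conj_mul_adOp ?_
  rw [hf]
  simpa [mul_assoc] using HasSum.mul_left (conj z) hT

end HasExpval

section Eigenstate

variable {φ : ℕ → ℝ} {κ c : ℝ} {f : ℕ → ℂ} {z : ℂ}

theorem expval_mul_self_sub_sq (hκ : 0 ≤ κ) (hc : 0 ≤ c) (h0 : φ 0 = 0)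
    (hrec : ∀ n, φ (n + 1) = κ * φ n + c) (hf : aOp φ f = z • f) (hnorm : HasExpval 1 f 1)
    (α β : ℂ) :
    expval ((α • adOp φ + β • aOp φ) * (α • adOp φ + β • aOp φ)) f
      - expval (α • adOp φ + β • aOp φ) f ^ 2 = α * β * ((κ - 1) * ‖z‖ ^ 2 + c) := by
  have ha : HasExpval (aOp φ) f z := by simpa using hnorm.mul_aOp hf
  have had : HasExpval (adOp φ) f (conj z) := by simpa using hnorm.adOp_mul hf
  have haa := ha.mul_aOp hf
  have hadad := had.adOp_mul hf
  have hada := ha.adOp_mul hf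
  have haad : HasExpval (aOp φ * adOp φ) f (κ * (conj z * z) + c) := by
    rw [aOp_mul_adOp hκ hc h0 hrec]
    simpa using (hada.smul κ).add (hnorm.smul c)
  have hexpand : (α • adOp φ + β • aOp φ) * (α • adOp φ + β • aOp φ)
      = (α * α) • (adOp φ * adOp φ) + (α * β) • (adOp φ * aOp φ)
        + (α * β) • (aOp φ * adOp φ) + (β * β) • (aOp φ * aOp φ) := by
    simp only [mul_add, add_mul, smul_mul_smul_comm]
    module
  have hX := (had.smul α).add (ha.smul β)
  have hXX := (((hadad.smul (α * α)).add (hada.smul (α * β))).add (haad.smul (α * β))).add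
    (haa.smul (β * β))
  rw [hexpand, hXX.expval_eq hnorm, hX.expval_eq hnorm, ← Complex.conj_mul']
  ring

end Eigenstate

section CoherentState

variable {φ w : ℕ → ℝ}

lemma aOp_coherent_eq_smul (hφ : ∀ n, 0 ≤ φ n) (hw : ∀ n, φ (n + 1) * w (n + 1) = w n)
    (C : ℝ) (z : ℂ) :
    aOp φ (fun n => ((C * √(w n) : ℝ) : ℂ) * z ^ n)
      = z • fun n => ((C * √(w n) : ℝ) : ℂ) * z ^ n := by
  ext n
  have hsqrt : √(φ (n + 1)) * (C * √(w (n + 1))) = C * √(w n) := by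
    rw [mul_left_comm, ← Real.sqrt_mul (hφ _), hw]
  simp only [aOp_apply, Pi.smul_apply, smul_eq_mul, pow_succ, ← hsqrt]
  push_cast
  ring

lemma hasExpval_one_coherent (hw : ∀ n, 0 ≤ w n) {z : ℂ} {N : ℝ}
    (hN : HasSum (fun n => w n * (‖z‖ ^ 2) ^ n) N) (hN0 : 0 < N) :
    HasExpval 1 (fun n => (((√N)⁻¹ * √(w n) : ℝ) : ℂ) * z ^ n) 1 := by
  have hterm (n : ℕ) : conj ((((√N)⁻¹ * √(w n) : ℝ) : ℂ) * z ^ n)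
      * ((((√N)⁻¹ * √(w n) : ℝ) : ℂ) * z ^ n) = ((N⁻¹ * (w n * (‖z‖ ^ 2) ^ n) : ℝ) : ℂ) := by
    rw [map_mul, Complex.conj_ofReal, map_pow, mul_mul_mul_comm, ← mul_pow, Complex.conj_mul',
      ← Complex.ofReal_mul, mul_mul_mul_comm, ← mul_inv, Real.mul_self_sqrt hN0.le,
      Real.mul_self_sqrt (hw n)]
    push_cast
    ring
  have h : HasSum (fun n => ((N⁻¹ * (w n * (‖z‖ ^ 2) ^ n) : ℝ) : ℂ)) ((N⁻¹ * N : ℝ) : ℂ) :=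
    Complex.hasSum_ofReal.mpr (hN.mul_left N⁻¹)
  rw [inv_mul_cancel₀ hN0.ne', Complex.ofReal_one, ← funext hterm] at h
  simpa only [HasExpval, Module.End.one_apply] using h

end CoherentState

section QDeformedModel

/-- The q-Pochhammer symbol `(q; q)ₙ`. -/
def qPochhammer (q : ℝ) (n : ℕ) : ℝ := ∏ k ∈ Finset.range n, (1 - q ^ (k + 1))

lemma qPochhammer_succ (q : ℝ) (n : ℕ) :
    qPochhammer q (n + 1) = qPochhammer q n * (1 - q ^ (n + 1)) :=
  Finset.prod_range_succ _ _

lemma qPochhammer_pos {q : ℝ} (hq0 : 0 ≤ q) (hq1 : q < 1) (n : ℕ) : 0 < qPochhammer q n :=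
  Finset.prod_pos fun k _ => sub_pos.mpr (pow_lt_one₀ hq0 hq1 k.succ_ne_zero)

/-- `|⟨n|z⟩|² = N(|z|²)⁻¹ · coherentWeight q γ n · |z|^(2n)`. -/
noncomputable def coherentWeight (q γ : ℝ) (n : ℕ) : ℝ :=
  q ^ (n * (n - 1) / 2) / (γ ^ n * qPochhammer q n)

variable {q γ : ℝ}

lemma coherentWeight_zero : coherentWeight q γ 0 = 1 := by
  simp [coherentWeight, qPochhammer]

lemma coherentWeight_succ (n : ℕ) :
    coherentWeight q γ (n + 1) = coherentWeight q γ n * (q ^ n / (γ * (1 - q ^ (n + 1)))) := by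
  rw [coherentWeight, coherentWeight, div_mul_div_comm, Nat.triangle_succ, qPochhammer_succ,
    pow_add q, pow_succ γ]
  ring

lemma coherentWeight_nonneg (hq0 : 0 ≤ q) (hq1 : q < 1) (hγ : 0 ≤ γ) (n : ℕ) :
    0 ≤ coherentWeight q γ n := by
  have := qPochhammer_pos hq0 hq1 n
  unfold coherentWeight
  positivity

lemma sqrt_coherentWeight (hq0 : 0 ≤ q) (hγ : 0 ≤ γ) (hq1 : q < 1) (n : ℕ) :
    √(coherentWeight q γ n) = q ^ ((n * (n - 1) : ℝ) / 4) * (√(γ ^ n * qPochhammer q n))⁻¹ := by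
  have hexp : (((n * (n - 1) / 2 : ℕ) : ℝ)) * (1 / 2) = (n * (n - 1) : ℝ) / 4 := by
    rw [← Nat.choose_two_right, Nat.cast_choose_two]
    ring
  have hden : 0 ≤ γ ^ n * qPochhammer q n := by have := qPochhammer_pos hq0 hq1 n; positivity
  rw [coherentWeight, Real.sqrt_div' _ hden, Real.sqrt_eq_rpow, ← Real.rpow_natCast,
    ← Real.rpow_mul hq0, hexp, div_eq_mul_inv]

lemma summable_coherentWeight_mul_pow (hq0 : 0 ≤ q) (hq1 : q < 1) (hγ : 0 < γ) (t : ℝ) :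
    Summable fun n => coherentWeight q γ n * t ^ n := by
  refine summable_of_ratio_norm_eventually_le (r := 1 / 2) (by norm_num) ?_
  have hlim : Filter.Tendsto (fun n => q ^ n * |t|) Filter.atTop (nhds 0) := by
    simpa using (tendsto_pow_atTop_nhds_zero_of_lt_one hq0 hq1).mul_const |t|
  filter_upwards [hlim.eventually_lt_const (by nlinarith : 0 < γ * (1 - q) / 2)] with n hn
  have hden : γ * (1 - q) ≤ γ * (1 - q ^ (n + 1)) := by
    gcongr
    exact pow_le_of_le_one hq0 hq1.le n.succ_ne_zero
  have hratio : 0 ≤ q ^ n / (γ * (1 - q ^ (n + 1))) :=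
    div_nonneg (pow_nonneg hq0 n) (by nlinarith)
  have hstep : q ^ n / (γ * (1 - q ^ (n + 1))) * |t| ≤ 1 / 2 := by
    rw [div_mul_eq_mul_div, div_le_iff₀ (by nlinarith)]
    nlinarith
  rw [coherentWeight_succ, pow_succ t, show ∀ a r s : ℝ, a * r * (s * t) = a * s * (r * t) by
    intros; ring, norm_mul _ (_ * t), norm_mul _ t, Real.norm_of_nonneg hratio, Real.norm_eq_abs t,
    mul_comm (1 / 2)]
  exact mul_le_mul_of_nonneg_left hstep (norm_nonneg _)

lemma tsum_coherentWeight_mul_pow_pos (hq0 : 0 ≤ q) (hq1 : q < 1) (hγ : 0 < γ) {t : ℝ}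
    (ht : 0 ≤ t) : 0 < ∑' n, coherentWeight q γ n * t ^ n :=
  (summable_coherentWeight_mul_pow hq0 hq1 hγ t).tsum_pos
    (fun n => mul_nonneg (coherentWeight_nonneg hq0 hq1 hγ.le n) (pow_nonneg ht n)) 0
    (by simp [coherentWeight_zero])

variable {l lam : ℝ} {φ : ℕ → ℝ}

lemma phi_zero (hφ : ∀ j : ℕ, φ j = l ^ 2 * q ^ lam * (1 - q ^ (-(j : ℝ))) / (q - 1)) :
    φ 0 = 0 := by
  simp [hφ]

lemma phi_mul_pow (hq0 : 0 < q) (hq1 : q < 1)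
    (hφ : ∀ j : ℕ, φ j = l ^ 2 * q ^ lam * (1 - q ^ (-(j : ℝ))) / (q - 1))
    (hγ : γ = l ^ 2 * q ^ (lam - 1) / (1 - q)) (j : ℕ) :
    φ j * q ^ j = q * γ * (1 - q ^ j) := by
  have hinv : q ^ (-(j : ℝ)) * q ^ j = 1 := by
    rw [Real.rpow_neg hq0.le, Real.rpow_natCast, inv_mul_cancel₀ (by positivity)]
  have hq1' : q - 1 ≠ 0 := by linarith
  have hq1'' : 1 - q ≠ 0 := by linarith
  rw [hφ, hγ, Real.rpow_sub_one hq0.ne']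
  field_simp
  linear_combination l ^ 2 * (q - 1) * hinv

lemma phi_succ (hq0 : 0 < q) (hq1 : q < 1)
    (hφ : ∀ j : ℕ, φ j = l ^ 2 * q ^ lam * (1 - q ^ (-(j : ℝ))) / (q - 1))
    (hγ : γ = l ^ 2 * q ^ (lam - 1) / (1 - q)) (n : ℕ) :
    φ (n + 1) = q⁻¹ * φ n + l ^ 2 * q ^ (lam - 1) := by
  have hc : l ^ 2 * q ^ (lam - 1) = γ * (1 - q) := by
    rw [hγ, div_mul_cancel₀ _ (by linarith)]
  have hqinv : q⁻¹ * q = 1 := inv_mul_cancel₀ hq0.ne'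
  have h1 := phi_mul_pow hq0 hq1 hφ hγ (n + 1)
  have h2 := phi_mul_pow hq0 hq1 hφ hγ n
  rw [hc]
  apply mul_right_cancel₀ (pow_ne_zero (n + 1) hq0.ne')
  rw [pow_succ] at h1 ⊢
  linear_combination h1 - q⁻¹ * q * h2 - q * γ * (1 - q ^ n) * hqinv

lemma phi_succ_mul_coherentWeight_succ (hq0 : 0 < q) (hq1 : q < 1) (hγ0 : 0 < γ)
    (hφ : ∀ j : ℕ, φ j = l ^ 2 * q ^ lam * (1 - q ^ (-(j : ℝ))) / (q - 1))
    (hγ : γ = l ^ 2 * q ^ (lam - 1) / (1 - q)) (n : ℕ) :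
    φ (n + 1) * coherentWeight q γ (n + 1) = coherentWeight q γ n := by
  have hpow : q ^ (n + 1) < 1 := pow_lt_one₀ hq0.le hq1 n.succ_ne_zero
  have hden : γ * (1 - q ^ (n + 1)) ≠ 0 := by nlinarith
  have hφq : φ (n + 1) * q ^ n = γ * (1 - q ^ (n + 1)) := by
    have h := phi_mul_pow hq0 hq1 hφ hγ (n + 1)
    rw [pow_succ q n, ← mul_assoc] at h
    exact mul_left_cancel₀ hq0.ne' (by linear_combination h)
  rw [coherentWeight_succ, mul_left_comm, ← mul_div_assoc, hφq, div_self hden, mul_one]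

/-- The components `⟨n|z⟩` of the coherent state. -/
noncomputable def coherentState (q γ : ℝ) (z : ℂ) (n : ℕ) : ℂ :=
  (((√(∑' k, coherentWeight q γ k * (‖z‖ ^ 2) ^ k))⁻¹ * √(coherentWeight q γ n) : ℝ) : ℂ) * z ^ n

lemma aOp_coherentState (hq0 : 0 < q) (hq1 : q < 1) (hγ0 : 0 < γ)
    (hφ : ∀ j : ℕ, φ j = l ^ 2 * q ^ lam * (1 - q ^ (-(j : ℝ))) / (q - 1))
    (hγ : γ = l ^ 2 * q ^ (lam - 1) / (1 - q)) (z : ℂ) :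
    aOp φ (coherentState q γ z) = z • coherentState q γ z :=
  aOp_coherent_eq_smul
    (nonneg_of_eq_mul_add (inv_nonneg.mpr hq0.le) (by positivity) (phi_zero hφ)
      (phi_succ hq0 hq1 hφ hγ))
    (phi_succ_mul_coherentWeight_succ hq0 hq1 hγ0 hφ hγ) _ z

lemma hasExpval_one_coherentState (hq0 : 0 ≤ q) (hq1 : q < 1) (hγ0 : 0 < γ) (z : ℂ) :
    HasExpval 1 (coherentState q γ z) 1 :=
  hasExpval_one_coherent (coherentWeight_nonneg hq0 hq1 hγ0.le)
    (summable_coherentWeight_mul_pow hq0 hq1 hγ0 _).hasSum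
    (tsum_coherentWeight_mul_pow_pos hq0 hq1 hγ0 (by positivity))

end QDeformedModel

theorem stmt16 (l lam q : ℝ) (hl : l ≠ 0) (hq0 : 0 < q) (hq1 : q < 1)
    (φ : ℕ → ℝ)
    (hφ : ∀ j : ℕ, φ j = l ^ 2 * q ^ lam * (1 - q ^ (-(j : ℝ))) / (q - 1))
    (γ : ℝ) (hγ : γ = l ^ 2 * q ^ (lam - 1) / (1 - q))
    (qp : ℕ → ℝ) (hqp : ∀ n : ℕ, qp n = ∏ k ∈ Finset.range n, (1 - q ^ (k + 1)))
    (Nf : ℝ → ℝ)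
    (hN : ∀ t : ℝ, Nf t = ∑' n : ℕ, q ^ (n * (n - 1) / 2) * t ^ n / (γ ^ n * qp n))
    (ψ : ℂ → ℕ → ℂ)
    (hψ : ∀ (z : ℂ) (n : ℕ), ψ z n =
      (((Real.sqrt (Nf (‖z‖ ^ 2)))⁻¹ *
        q ^ ((n * (n - 1) : ℝ) / 4) * (Real.sqrt (γ ^ n * qp n))⁻¹ : ℝ) : ℂ) * z ^ n)
    (Q P : Module.End ℂ (ℕ → ℂ))
    (hQ : Q = ((Real.sqrt 2 : ℂ))⁻¹ • (adOp φ + aOp φ))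
    (hP : P = (Complex.I * ((Real.sqrt 2 : ℂ))⁻¹) • (adOp φ - aOp φ)) :
    ∀ z : ℂ,
      let v : ℝ := l ^ 2 * q ^ (lam - 1) / 2 + (q⁻¹ - 1) * ‖z‖ ^ 2 / 2
      expval (Q * Q) (ψ z) - (expval Q (ψ z)) ^ 2 = (v : ℂ) ∧
      expval (P * P) (ψ z) - (expval P (ψ z)) ^ 2 = (v : ℂ) ∧
      Real.sqrt v * Real.sqrt v = v := by
  intro z v
  obtain rfl : qp = qPochhammer q := funext hqp
  have hγ0 : 0 < γ := by rw [hγ]; have := sub_pos.mpr hq1; positivity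
  have hc : 0 ≤ l ^ 2 * q ^ (lam - 1) := by positivity
  have hψz : ψ z = coherentState q γ z := by
    have hNf : Nf (‖z‖ ^ 2) = ∑' k, coherentWeight q γ k * (‖z‖ ^ 2) ^ k := by
      simp only [hN, coherentWeight, mul_div_right_comm]
    ext n
    rw [hψ, hNf, mul_assoc, ← sqrt_coherentWeight hq0.le hγ0.le hq1, coherentState]
  have hf := aOp_coherentState hq0 hq1 hγ0 hφ hγ z
  have hnorm := hasExpval_one_coherentState hq0.le hq1 hγ0 z
  rw [← hψz] at hf hnorm
  have hv : (v : ℂ) = 2⁻¹ * ((q⁻¹ - 1 : ℝ) * ‖z‖ ^ 2 + l ^ 2 * q ^ (lam - 1) : ℝ) := by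
    simp only [v]; push_cast; ring
  have hs : ((√2 : ℝ) : ℂ)⁻¹ * ((√2 : ℝ) : ℂ)⁻¹ = 2⁻¹ := by
    rw [← mul_inv, ← Complex.ofReal_mul, Real.mul_self_sqrt zero_le_two, Complex.ofReal_ofNat]
  have hsI : Complex.I * ((√2 : ℝ) : ℂ)⁻¹ * -(Complex.I * ((√2 : ℝ) : ℂ)⁻¹) = 2⁻¹ := by
    linear_combination (-(((√2 : ℝ) : ℂ)⁻¹ * ((√2 : ℝ) : ℂ)⁻¹)) * Complex.I_sq + hs
  have hvar := expval_mul_self_sub_sq (inv_nonneg.mpr hq0.le) hc (phi_zero hφ)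
    (phi_succ hq0 hq1 hφ hγ) hf hnorm
  refine ⟨?_, ?_, Real.mul_self_sqrt ?_⟩
  · rw [hQ, smul_add, hvar, hs, hv]
    push_cast; ring
  · rw [hP, smul_sub, sub_eq_add_neg (_ • adOp φ), ← neg_smul, hvar, hsI, hv]
    push_cast; ring
  · have : 0 ≤ q⁻¹ - 1 := sub_nonneg.mpr (one_le_inv₀ hq0 |>.mpr hq1.le)
    positivity
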